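/- arXiv:0801.1703 — 6 statements merged into one kernel-verified Lean document; each statement's English description precedes it below -/
import Mathlib

section
/- Let K_X be a real symmetric positive-definite N×N matrix and D > 0. Any minimizer K_{Z*} of log det(K_X + K_Z) − log det K_Z over real symmetric positive-definite N×N matrices K_Z satisfying tr(K_Z) ≤ N·D must satisfy tr(K_{Z*}) = N·D; that is, the trace (distortion) constraint is active at the optimum. -/
open Real

/-!
If `tr K_Z < N·D`, scale `K_Z` by `c = N·D / tr K_Z > 1`; the constraint still holds. Since
`log det (K_X + c K_Z) - log det (c K_Z) = log det (c⁻¹ K_X + K_Z) - log det K_Z`, the objective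
strictly decreases, because the determinant is strictly monotone on positive definite matrices:
`det (A + E) = det A · det (1 + A^{-1/2} E A^{-1/2}) > det A`, all eigenvalues of the second
factor exceeding `1`.
-/

namespace Matrix

open scoped MatrixOrder

variable {n : Type*} [Fintype n] [DecidableEq n] [Nonempty n]

lemma PosDef.one_lt_det_one_add {M : Matrix n n ℝ} (hM : M.PosDef) : 1 < (1 + M).det := by
  have hM_sa : IsSelfAdjoint M := hM.1 -- side condition of `cfc_const_add` and `cfc_id'`
  have hcfc : cfc (fun x : ℝ ↦ 1 + x) M = 1 + M := by
    rw [cfc_const_add (1 : ℝ) (fun x ↦ x) M, cfc_id' ℝ M, map_one]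
  rw [← hcfc, hM.1.cfc_eq]
  simp only [IsHermitian.cfc, RCLike.ofReal_real_eq_id, CompTriple.comp_eq, det_map, det_diagonal]
  simpa using Finset.prod_lt_prod_of_nonempty (fun _ _ ↦ one_pos)
    (fun i _ ↦ lt_add_of_pos_right 1 (hM.eigenvalues_pos i)) Finset.univ_nonempty

lemma PosDef.det_lt_det_add {A E : Matrix n n ℝ} (hA : A.PosDef) (hE : E.PosDef) :
    A.det < (A + E).det := by
  set S := CFC.sqrt A
  have hS : S.PosDef :=
    isStrictlyPositive_iff_posDef.mp (IsStrictlyPositive.sqrt A hA.isStrictlyPositive)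
  have hSS : S * S = A := CFC.sqrt_mul_sqrt_self A hA.posSemidef.nonneg
  have hdS : IsUnit S.det := (isUnit_iff_isUnit_det S).mp hS.isUnit
  have hM : (S⁻¹ * E * S⁻¹).PosDef := by
    have := hE.conjTranspose_mul_mul_same (mulVec_injective_of_isUnit hS.inv.isUnit)
    rwa [hS.inv.1.eq] at this
  have hfactor : A + E = S * (1 + S⁻¹ * E * S⁻¹) * S := by
    rw [mul_add, add_mul, mul_one, hSS, ← mul_assoc, ← mul_assoc, mul_nonsing_inv _ hdS, one_mul,
      mul_assoc, nonsing_inv_mul _ hdS, mul_one]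
  calc A.det = A.det * 1 := (mul_one _).symm
    _ < A.det * (1 + S⁻¹ * E * S⁻¹).det := mul_lt_mul_of_pos_left hM.one_lt_det_one_add hA.det_pos
    _ = (A + E).det := by rw [hfactor, det_mul, det_mul, ← hSS, det_mul]; ring

lemma log_det_add_smul_sub_log_det_smul_lt {A B : Matrix n n ℝ} (hA : A.PosDef) (hB : B.PosDef)
    {c : ℝ} (hc : 1 < c) :
    log (A + c • B).det - log (c • B).det < log (A + B).det - log B.det := by
  have hc₀ : 0 < c := one_pos.trans hc
  have hAB : (c⁻¹ • A + B).PosDef := (hA.smul (inv_pos.mpr hc₀)).add hB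
  have hdet : (c⁻¹ • A + B).det < (A + B).det := by
    have hsplit : A + B = (c⁻¹ • A + B) + (1 - c⁻¹) • A := by module
    rw [hsplit]
    exact hAB.det_lt_det_add (hA.smul (sub_pos.mpr (inv_lt_one_of_one_lt₀ hc)))
  have hscale : A + c • B = c • (c⁻¹ • A + B) := by
    rw [smul_add, smul_inv_smul₀ hc₀.ne']
  rw [hscale, det_smul, det_smul, log_mul (by positivity) hAB.det_pos.ne',
    log_mul (by positivity) hB.det_pos.ne']
  linarith [log_lt_log hAB.det_pos hdet]

end Matrix

theorem stmt6_general {N : ℕ} (K_X : Matrix (Fin N) (Fin N) ℝ) (hK : K_X.PosDef)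
    (D : ℝ)
    (KZs : Matrix (Fin N) (Fin N) ℝ) (hKZs : KZs.PosDef) (htr : KZs.trace ≤ N * D)
    (hmin : ∀ K_Z : Matrix (Fin N) (Fin N) ℝ, K_Z.PosDef → K_Z.trace ≤ N * D →
      Real.log (K_X + KZs).det - Real.log KZs.det
        ≤ Real.log (K_X + K_Z).det - Real.log K_Z.det) :
    KZs.trace = N * D := by
  rcases N.eq_zero_or_pos with rfl | hN
  · simp [Matrix.trace]
  have : Nonempty (Fin N) := ⟨⟨0, hN⟩⟩
  refine htr.eq_of_not_lt fun hlt ↦ ?_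
  have htr_pos : 0 < KZs.trace := hKZs.trace_pos
  set c := N * D / KZs.trace
  have hc : 1 < c := (one_lt_div htr_pos).mpr hlt
  have hle := hmin (c • KZs) (hKZs.smul (one_pos.trans hc)) (by
    rw [Matrix.trace_smul, smul_eq_mul, div_mul_cancel₀ _ htr_pos.ne'])
  exact hle.not_gt (Matrix.log_det_add_smul_sub_log_det_smul_lt hK hKZs hc)

/-- Any minimizer of `log det(K_X + K_Z) - log det K_Z` over symmetric
positive-definite matrices `K_Z` with `tr K_Z ≤ N·D` has an active trace constraint:
`tr K_{Z*} = N·D`. -/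
theorem stmt6 {N : ℕ} (K_X : Matrix (Fin N) (Fin N) ℝ) (hK : K_X.PosDef)
    (D : ℝ) (hD : 0 < D)
    (KZs : Matrix (Fin N) (Fin N) ℝ) (hKZs : KZs.PosDef) (htr : KZs.trace ≤ N * D)
    (hmin : ∀ K_Z : Matrix (Fin N) (Fin N) ℝ, K_Z.PosDef → K_Z.trace ≤ N * D →
      Real.log (K_X + KZs).det - Real.log KZs.det
        ≤ Real.log (K_X + K_Z).det - Real.log K_Z.det) :
    KZs.trace = N * D :=
  stmt6_general K_X hK D KZs hKZs htr hmin
end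

section
/- Let K_X be a real symmetric positive-definite N×N matrix and β > 0. A real symmetric positive-definite N×N matrix K_Z satisfies the stationarity equation (K_X + K_Z)^{-1} − K_Z^{-1} + β I = 0 if and only if K_Z = (1/2)√(K_X² + (4/β) K_X) − (1/2) K_X. -/
/-!
Write `A = K_X + K_Z`. Since `A⁻¹ - K_Z⁻¹ = -A⁻¹ K_X K_Z⁻¹`, the stationarity equation says
exactly `β (K_X + K_Z) K_Z = K_X`; it also forces `A⁻¹ = K_Z⁻¹ - β I` to commute with `K_Z⁻¹`,
so `K_Z` commutes with `K_X`. For commuting `K_X, K_Z` that quadratic equation is equivalent to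
`(K_X + 2 K_Z)² = K_X² + (4/β) K_X = S²`, and both `K_X + 2 K_Z` and `S` are positive
semidefinite, so by uniqueness of positive square roots this means `K_X + 2 K_Z = S`.
Conversely, `K_X` commutes with `S²` and hence with its square root `S`, so `K_Z = (S - K_X)/2`
commutes with `K_X` as well.
-/

open scoped MatrixOrder

section SquareRoot

variable {A : Type*} [PartialOrder A] [Ring A] [StarRing A] [TopologicalSpace A]
  [StarOrderedRing A] [Algebra ℝ A] [ContinuousFunctionalCalculus ℝ A IsSelfAdjoint]
  [NonnegSpectrumClass ℝ A] [IsTopologicalRing A] [T2Space A]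

theorem Commute.of_mul_self_left_of_nonneg {a b : A} (ha : 0 ≤ a)
    (h : Commute (a * a) b) : Commute a b := by
  rw [← CFC.sqrt_mul_self a, CFC.sqrt_eq_cfc]
  exact h.cfc_nnreal _

end SquareRoot

theorem add_two_smul_sq_eq_iff {𝕜 A : Type*} [Field 𝕜] [CharZero 𝕜] [Ring A] [Algebra 𝕜 A]
    {k z : A} (hkz : Commute k z) {β : 𝕜} (hβ : β ≠ 0) :
    (k + (2 : 𝕜) • z) ^ 2 = k ^ 2 + (4 / β) • k ↔ β • ((k + z) * z) = k := by
  have hexpand : (k + (2 : 𝕜) • z) ^ 2 = k ^ 2 + (4 : 𝕜) • ((k + z) * z) := by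
    simp only [sq, add_mul, mul_add, smul_mul_assoc, mul_smul_comm, hkz.eq]
    module
  have hfour : (4 : 𝕜) • ((k + z) * z) = (4 / β) • β • ((k + z) * z) := by
    rw [smul_smul, div_mul_cancel₀ _ hβ]
  rw [hexpand, add_right_inj, hfour, smul_right_inj (div_ne_zero (by norm_num) hβ)]

namespace Matrix

variable {n R : Type*} [Fintype n] [DecidableEq n] [CommRing R] {k z : Matrix n n R}

theorem inv_add_sub_inv_add_smul_one_eq_zero_iff (hkz : IsUnit (k + z)) (hz : IsUnit z)
    (β : R) : (k + z)⁻¹ - z⁻¹ + β • 1 = 0 ↔ β • ((k + z) * z) = k := by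
  have hfactor : (k + z)⁻¹ - z⁻¹ + β • 1 = (k + z)⁻¹ * (β • ((k + z) * z) - k) * z⁻¹ := by
    rw [inv_sub_inv (iff_of_true hkz hz), sub_add_cancel_right, Matrix.mul_sub, Matrix.sub_mul,
      Matrix.mul_smul, Matrix.smul_mul, ← Matrix.mul_assoc,
      nonsing_inv_mul _ ((isUnit_iff_isUnit_det _).1 hkz), Matrix.one_mul,
      mul_nonsing_inv _ ((isUnit_iff_isUnit_det _).1 hz), Matrix.mul_neg, Matrix.neg_mul]
    abel
  rw [hfactor, IsUnit.mul_left_eq_zero (isUnit_nonsing_inv_iff.2 hz),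
    IsUnit.mul_right_eq_zero (isUnit_nonsing_inv_iff.2 hkz), sub_eq_zero]

theorem commute_of_inv_add_sub_inv_add_smul_one_eq_zero (hkz : IsUnit (k + z))
    (hz : IsUnit z) {β : R} (h : (k + z)⁻¹ - z⁻¹ + β • 1 = 0) : Commute k z := by
  have hinv : (k + z)⁻¹ = z⁻¹ - β • 1 := by
    rw [← sub_eq_zero, ← h]
    abel
  have hcomm : Commute (k + z)⁻¹⁻¹ z⁻¹⁻¹ := by
    simp only [nonsing_inv_eq_ringInverse] at hinv ⊢
    rw [hinv]
    exact ((Commute.refl _).sub_left ((Commute.one_left _).smul_left β)).ringInverse_ringInverse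
  rw [nonsing_inv_nonsing_inv _ ((isUnit_iff_isUnit_det _).1 hkz),
    nonsing_inv_nonsing_inv _ ((isUnit_iff_isUnit_det _).1 hz)] at hcomm
  simpa only [add_sub_cancel_right] using hcomm.sub_left (Commute.refl z)

end Matrix

/-- For symmetric positive-definite `K_X` and `β > 0`, a symmetric
positive-definite `K_Z` satisfies the stationarity equation
`(K_X + K_Z)⁻¹ - K_Z⁻¹ + β I = 0` iff `K_Z = (1/2)√(K_X² + (4/β)K_X) - (1/2)K_X`
(here `S` is the PSD square root of `K_X² + (4/β)K_X`). -/
theorem stmt7 {N : ℕ} (K_X : Matrix (Fin N) (Fin N) ℝ) (hK : K_X.PosDef)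
    (beta : ℝ) (hbeta : 0 < beta)
    (S : Matrix (Fin N) (Fin N) ℝ) (hS : S.PosSemidef)
    (hS2 : S * S = K_X ^ 2 + (4 / beta) • K_X)
    (K_Z : Matrix (Fin N) (Fin N) ℝ) (hKZ : K_Z.PosDef) :
    (K_X + K_Z)⁻¹ - K_Z⁻¹ + beta • (1 : Matrix (Fin N) (Fin N) ℝ) = 0 ↔
      K_Z = (1 / 2 : ℝ) • S - (1 / 2 : ℝ) • K_X := by
  have hA : IsUnit (K_X + K_Z) := (hK.add hKZ).isUnit
  have hstat := Matrix.inv_add_sub_inv_add_smul_one_eq_zero_iff hA hKZ.isUnit beta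
  have hroot : K_X + (2 : ℝ) • K_Z = S ↔
      (K_X + (2 : ℝ) • K_Z) ^ 2 = K_X ^ 2 + (4 / beta) • K_X := by
    rw [← hS2, ← sq]
    exact (CFC.sq_eq_sq_iff _ _ ((hK.posSemidef.add (hKZ.posSemidef.smul zero_le_two)).nonneg)
      hS.nonneg).symm
  constructor
  · intro h
    have hc := Matrix.commute_of_inv_add_sub_inv_add_smul_one_eq_zero hA hKZ.isUnit h
    rw [← hroot.2 ((add_two_smul_sq_eq_iff hc hbeta.ne').2 (hstat.1 h))]
    module
  · intro h
    have hKS2 : Commute (S * S) K_X := by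
      rw [hS2]
      exact ((Commute.refl K_X).pow_left 2).add_left ((Commute.refl K_X).smul_left _)
    have hKS : Commute K_X S := (Commute.of_mul_self_left_of_nonneg hS.nonneg hKS2).symm
    have hc : Commute K_X K_Z := by
      rw [h]
      exact (hKS.smul_right _).sub_right ((Commute.refl K_X).smul_right _)
    exact hstat.2 ((add_two_smul_sq_eq_iff hc hbeta.ne').1 (hroot.1 (by rw [h]; module)))
end

section
/- Let λ_1,…,λ_N be positive reals and define, for α > 0, D(α) = (1/(2N)) Σ_{k=1}^{N} ( √(λ_k² + λ_k α) − λ_k ) and R(α) = (1/N) Σ_{k=1}^{N} log( (√(λ_k + α) + √λ_k) / √α ). Then for every α > 0, R'(α) = −(1/(2Nα)) Σ_{k=1}^{N} √λ_k / √(λ_k + α), D'(α) = (1/(4N)) Σ_{k=1}^{N} √λ_k / √(λ_k + α), and consequently R'(α) = −(2/α) · D'(α); i.e., along the parametric curve (D(α), R(α)) the slope dR/dD equals −2/α. -/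
open Real Filter
open scoped ENNReal NNReal

noncomputable section

theorem hasDerivAt_sqrt_sq_add_mul {l α : ℝ} (hl : 0 < l) (hlα : 0 < l + α) :
    HasDerivAt (fun a : ℝ => √(l ^ 2 + l * a)) (1 / 2 * (√l / √(l + α))) α := by
  have hlin : HasDerivAt (fun a : ℝ => l ^ 2 + l * a) l α := by
    simpa using ((hasDerivAt_id α).const_mul l).const_add (l ^ 2)
  have hfactor : √(l ^ 2 + l * α) = √l * √(l + α) := by
    rw [show l ^ 2 + l * α = l * (l + α) by ring, sqrt_mul hl.le]
  convert hlin.sqrt (by nlinarith) using 1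
  have hsq : √l * √l = l := mul_self_sqrt hl.le
  have hl' : √l ≠ 0 := (sqrt_pos.2 hl).ne'
  have hlα' : √(l + α) ≠ 0 := (sqrt_pos.2 hlα).ne'
  rw [hfactor]
  field_simp
  linear_combination hsq

/-- Rationalizing, `1 / (√(l + α) + √l) = (√(l + α) - √l) / α`: the `√(l + α)` part of the
derivative of the numerator cancels the derivative `1 / (2α)` of `log √a`. -/
theorem hasDerivAt_log_sqrt_add_sqrt_div_sqrt {l α : ℝ} (hl : 0 ≤ l) (hα : 0 < α) :
    HasDerivAt (fun a : ℝ => log ((√(l + a) + √l) / √a))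
      (-(1 / (2 * α)) * (√l / √(l + α))) α := by
  have hlα : 0 < l + α := by positivity
  have hnum : HasDerivAt (fun a : ℝ => √(l + a) + √l) (1 / (2 * √(l + α))) α := by
    have hlin : HasDerivAt (fun a : ℝ => l + a) 1 α := by
      simpa using (hasDerivAt_id α).const_add l
    simpa using (hlin.sqrt hlα.ne').add_const √l
  have hlog_div : (fun a : ℝ => log ((√(l + a) + √l) / √a))
      =ᶠ[nhds α] fun a => log (√(l + a) + √l) - log √a := by
    filter_upwards [eventually_gt_nhds hα] with a ha
    rw [log_div (by positivity) (sqrt_pos.2 ha).ne']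
  refine HasDerivAt.congr_of_eventuallyEq ?_ hlog_div
  convert (hnum.log (by positivity)).fun_sub ((hasDerivAt_sqrt hα.ne').log (sqrt_pos.2 hα).ne')
    using 1
  have hs : √(l + α) * √(l + α) = l + α := mul_self_sqrt hlα.le
  have ht : √l * √l = l := mul_self_sqrt hl
  have hu : √α * √α = α := mul_self_sqrt hα.le
  have hs' : √(l + α) ≠ 0 := (sqrt_pos.2 hlα).ne'
  have hu' : √α ≠ 0 := (sqrt_pos.2 hα).ne'
  have hst : √(l + α) + √l ≠ 0 := by positivity
  field_simp
  linear_combination (-(√l * √(l + α)) - √l ^ 2 - α) * hu + α * hs - α * ht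

theorem stmt10_general {N : ℕ} (lam : Fin N → ℝ) (hlam : ∀ k, 0 < lam k) :
    ∀ alpha : ℝ, 0 < alpha →
      HasDerivAt
        (fun a : ℝ => (1 / (2 * N)) * ∑ k, (Real.sqrt (lam k ^ 2 + lam k * a) - lam k))
        ((1 / (4 * N)) * ∑ k, Real.sqrt (lam k) / Real.sqrt (lam k + alpha)) alpha ∧
      HasDerivAt
        (fun a : ℝ => (1 / N) * ∑ k,
          Real.log ((Real.sqrt (lam k + a) + Real.sqrt (lam k)) / Real.sqrt a))
        (-(1 / (2 * N * alpha)) * ∑ k, Real.sqrt (lam k) / Real.sqrt (lam k + alpha)) alpha ∧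
      -(1 / (2 * N * alpha)) * ∑ k, Real.sqrt (lam k) / Real.sqrt (lam k + alpha)
        = -(2 / alpha) *
          ((1 / (4 * N)) * ∑ k, Real.sqrt (lam k) / Real.sqrt (lam k + alpha)) := by
  intro alpha halpha
  have hD := (HasDerivAt.fun_sum (u := Finset.univ) fun k _ =>
    (hasDerivAt_sqrt_sq_add_mul (hlam k) (by linarith [hlam k])).sub_const (lam k)).const_mul
      (1 / (2 * N : ℝ))
  have hR := (HasDerivAt.fun_sum (u := Finset.univ) fun k _ =>
    hasDerivAt_log_sqrt_add_sqrt_div_sqrt (hlam k).le halpha).const_mul (1 / N : ℝ)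
  rw [← Finset.mul_sum] at hD hR
  exact ⟨hD.congr_deriv (by ring), hR.congr_deriv (by ring), by ring⟩

/-- The parametric rate and distortion functions `R(α)`, `D(α)` satisfy
`R'(α) = -(1/(2Nα)) Σ_k √λ_k/√(λ_k+α)`, `D'(α) = (1/(4N)) Σ_k √λ_k/√(λ_k+α)`, hence
`R'(α) = -(2/α) D'(α)`: the slope of the parametric curve `(D, R)` is `-2/α`. -/
theorem stmt10 {N : ℕ} (hN : 0 < N) (lam : Fin N → ℝ) (hlam : ∀ k, 0 < lam k) :
    ∀ alpha : ℝ, 0 < alpha →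
      HasDerivAt
        (fun a : ℝ => (1 / (2 * N)) * ∑ k, (Real.sqrt (lam k ^ 2 + lam k * a) - lam k))
        ((1 / (4 * N)) * ∑ k, Real.sqrt (lam k) / Real.sqrt (lam k + alpha)) alpha ∧
      HasDerivAt
        (fun a : ℝ => (1 / N) * ∑ k,
          Real.log ((Real.sqrt (lam k + a) + Real.sqrt (lam k)) / Real.sqrt a))
        (-(1 / (2 * N * alpha)) * ∑ k, Real.sqrt (lam k) / Real.sqrt (lam k + alpha)) alpha ∧
      -(1 / (2 * N * alpha)) * ∑ k, Real.sqrt (lam k) / Real.sqrt (lam k + alpha)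
        = -(2 / alpha) *
          ((1 / (4 * N)) * ∑ k, Real.sqrt (lam k) / Real.sqrt (lam k + alpha)) :=
  stmt10_general lam hlam
end
end

section
/- Let S_X : [−π, π] → ℝ be a measurable, Lebesgue-integrable function with S_X(ω) > 0 for almost every ω. Then for each D > 0 there exists a unique α > 0 such that D = (1/(4π)) ∫_{−π}^{π} ( √(S_X(ω) + α) − √(S_X(ω)) ) √(S_X(ω)) dω; equivalently, the map α ↦ (1/(4π)) ∫_{−π}^{π} ( √(S_X(ω)+α) − √(S_X(ω)) ) √(S_X(ω)) dω is a strictly increasing bijection from (0,∞) onto (0,∞). -/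
open Real Filter MeasureTheory Set
open scoped ENNReal NNReal

noncomputable section

/-!
The integrand `(√(s + α) - √s) √s` is nondecreasing in `α`, strictly so when `s > 0`, and
`1/2`-Lipschitz in `α ≥ 0`, since `(√(s + α) - √(s + β)) (√(s + α) + √(s + β)) = α - β` and
`2 √s ≤ √(s + α) + √(s + β)`. Hence its integral is a continuous, strictly increasing function of
`α ≥ 0` vanishing at `0`. It is unbounded because at `α = c²` the integrand is at least
`c √s - s`, whose integral `c ∫ √S - ∫ S` tends to infinity. The intermediate value theorem and
strict monotonicity give existence and uniqueness.
-/

theorem StrictMonoOn.existsUnique_gt_apply_eq {α δ : Type*} [ConditionallyCompleteLinearOrder α]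
    [DenselyOrdered α] [TopologicalSpace α] [OrderTopology α] [LinearOrder δ] [TopologicalSpace δ]
    [OrderClosedTopology δ] {f : α → δ} {a b : α} {y : δ} (hmono : StrictMonoOn f (Ici a))
    (hcont : ContinuousOn f (Ici a)) (hab : a ≤ b) (hay : f a < y) (hyb : y < f b) :
    ∃! x, a < x ∧ f x = y := by
  obtain ⟨x, hx, hfx⟩ := intermediate_value_Ioo hab (hcont.mono Icc_subset_Ici_self) ⟨hay, hyb⟩
  refine ⟨x, ⟨hx.1, hfx⟩, fun x' ⟨hx', hfx'⟩ => ?_⟩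
  exact hmono.injOn (mem_Ici.2 hx'.le) (mem_Ici.2 hx.1.le) (hfx'.trans hfx.symm)

def sqrtGap (α s : ℝ) : ℝ := (√(s + α) - √s) * √s

@[simp]
theorem sqrtGap_zero_left (s : ℝ) : sqrtGap 0 s = 0 := by simp [sqrtGap]

theorem continuous_sqrtGap (α : ℝ) : Continuous (sqrtGap α) := by
  unfold sqrtGap; fun_prop

theorem abs_sqrtGap_sub_sqrtGap_le {α β : ℝ} (hα : 0 ≤ α) (hβ : 0 ≤ β) (s : ℝ) :
    |sqrtGap α s - sqrtGap β s| ≤ |α - β| / 2 := by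
  rcases lt_or_ge s 0 with hs | hs
  · simp only [sqrtGap, sqrt_eq_zero_of_nonpos hs.le, mul_zero, sub_self, abs_zero]
    positivity
  set u := √s
  set a := √(s + α)
  set b := √(s + β)
  have hua : u ≤ a := sqrt_le_sqrt (by linarith)
  have hub : u ≤ b := sqrt_le_sqrt (by linarith)
  have hu : 0 ≤ u := sqrt_nonneg s
  have hab : |a - b| * (a + b) = |α - β| := by
    rw [← abs_of_nonneg (by linarith : 0 ≤ a + b), ← abs_mul]
    congr 1
    linear_combination sq_sqrt (by linarith : 0 ≤ s + α) - sq_sqrt (by linarith : 0 ≤ s + β)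
  have hdiff : sqrtGap α s - sqrtGap β s = (a - b) * u := by unfold sqrtGap; ring
  rw [hdiff, abs_mul, abs_of_nonneg hu]
  nlinarith [mul_le_mul_of_nonneg_left (by linarith : 2 * u ≤ a + b) (abs_nonneg (a - b))]

theorem sqrtGap_lt_sqrtGap {α β s : ℝ} (hs : 0 < s) (hα : 0 ≤ α) (hαβ : α < β) :
    sqrtGap α s < sqrtGap β s := by
  unfold sqrtGap
  have := sqrt_lt_sqrt (by linarith) (by linarith : s + α < s + β)
  nlinarith [sqrt_pos.2 hs]

theorem mul_sqrt_sub_le_sqrtGap_sq {c s : ℝ} (hs : 0 ≤ s) :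
    c * √s - s ≤ sqrtGap (c ^ 2) s := by
  have hc : c ≤ √(s + c ^ 2) := le_sqrt_of_sq_le (by linarith)
  unfold sqrtGap
  nlinarith [mul_self_sqrt hs, sqrt_nonneg s]

theorem sqrt_le_abs_add_one (s : ℝ) : √s ≤ |s| + 1 :=
  (sqrt_le_left (by positivity)).2 (by nlinarith [le_abs_self s, abs_nonneg s])

theorem integral_pos_of_ae_pos {X : Type*} [MeasurableSpace X] {μ : Measure X} [NeZero μ]
    {f : X → ℝ} (hf : Integrable f μ) (h : ∀ᵐ x ∂μ, 0 < f x) : 0 < ∫ x, f x ∂μ := by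
  have hnull : μ (Function.support f)ᶜ = 0 := by
    simpa [Function.compl_support] using ae_iff.1 (h.mono fun _ hx => hx.ne')
  rw [integral_pos_iff_support_of_nonneg_ae (h.mono fun _ hx => hx.le) hf,
    measure_congr (ae_eq_univ.2 hnull), Measure.measure_univ_pos]
  exact NeZero.ne μ

section Integral

variable {X : Type*} [MeasurableSpace X] {μ : Measure X} [IsFiniteMeasure μ] {S : X → ℝ}

theorem integrable_sqrtGap (hS : AEStronglyMeasurable S μ) {α : ℝ} (hα : 0 ≤ α) :
    Integrable (fun x => sqrtGap α (S x)) μ := by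
  refine Integrable.mono' (integrable_const (α / 2))
    ((continuous_sqrtGap α).comp_aestronglyMeasurable hS) (ae_of_all _ fun x => ?_)
  simpa [abs_of_nonneg hα] using abs_sqrtGap_sub_sqrtGap_le hα le_rfl (S x)

theorem lipschitzOnWith_integral_sqrtGap (hS : AEStronglyMeasurable S μ) :
    LipschitzOnWith (μ.real univ / 2).toNNReal (fun α => ∫ x, sqrtGap α (S x) ∂μ) (Ici 0) := by
  refine LipschitzOnWith.of_dist_le_mul fun α hα β hβ => ?_
  rw [dist_eq_norm, ← integral_sub (integrable_sqrtGap hS hα) (integrable_sqrtGap hS hβ),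
    coe_toNNReal _ (by positivity), dist_eq]
  calc ‖∫ x, (sqrtGap α (S x) - sqrtGap β (S x)) ∂μ‖ ≤ |α - β| / 2 * μ.real univ :=
        norm_integral_le_of_norm_le_const
          (ae_of_all _ fun x => abs_sqrtGap_sub_sqrtGap_le hα hβ (S x))
    _ = μ.real univ / 2 * |α - β| := by ring

variable [NeZero μ]

theorem strictMonoOn_integral_sqrtGap (hS : AEStronglyMeasurable S μ) (hpos : ∀ᵐ x ∂μ, 0 < S x) :
    StrictMonoOn (fun α => ∫ x, sqrtGap α (S x) ∂μ) (Ici 0) := by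
  intro α hα β hβ hαβ
  have hpos_diff : 0 < ∫ x, (sqrtGap β (S x) - sqrtGap α (S x)) ∂μ :=
    integral_pos_of_ae_pos ((integrable_sqrtGap hS hβ).sub (integrable_sqrtGap hS hα))
      (hpos.mono fun x hx => sub_pos.2 (sqrtGap_lt_sqrtGap hx hα hαβ))
  rw [integral_sub (integrable_sqrtGap hS hβ) (integrable_sqrtGap hS hα)] at hpos_diff
  exact sub_pos.1 hpos_diff

theorem exists_lt_integral_sqrtGap (hS : Integrable S μ) (hpos : ∀ᵐ x ∂μ, 0 < S x) (D : ℝ) :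
    ∃ b, 0 ≤ b ∧ D < ∫ x, sqrtGap b (S x) ∂μ := by
  have hsqrt : Integrable (fun x => √(S x)) μ :=
    (hS.abs.add (integrable_const 1)).mono' (continuous_sqrt.comp_aestronglyMeasurable hS.1)
      (ae_of_all _ fun x => by
        rw [norm_eq_abs, abs_of_nonneg (sqrt_nonneg _)]
        exact sqrt_le_abs_add_one (S x))
  set I := ∫ x, √(S x) ∂μ
  set J := ∫ x, S x ∂μ
  have hI : 0 < I := integral_pos_of_ae_pos hsqrt (hpos.mono fun _ hx => sqrt_pos.2 hx)
  set c := |D + J| / I + 1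
  refine ⟨c ^ 2, by positivity, ?_⟩
  have hlower : c * I - J ≤ ∫ x, sqrtGap (c ^ 2) (S x) ∂μ := by
    rw [← integral_const_mul, ← integral_sub (hsqrt.const_mul c) hS]
    exact integral_mono_ae ((hsqrt.const_mul c).sub hS) (integrable_sqrtGap hS.1 (by positivity))
      (hpos.mono fun x hx => mul_sqrt_sub_le_sqrtGap_sq hx.le)
  have hcI : c * I = |D + J| + I := by rw [add_mul, div_mul_cancel₀ _ hI.ne', one_mul]
  linarith [le_abs_self (D + J)]

end Integral

theorem stmt13_general (S : ℝ → ℝ)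
    (hint : IntegrableOn S (Set.Icc (-Real.pi) Real.pi))
    (hpos : ∀ᵐ om ∂(volume.restrict (Set.Icc (-Real.pi) Real.pi)), 0 < S om) :
    ∀ D : ℝ, 0 < D → ∃! alpha : ℝ, 0 < alpha ∧
      D = (1 / (4 * Real.pi)) * ∫ om in (-Real.pi)..Real.pi,
        (Real.sqrt (S om + alpha) - Real.sqrt (S om)) * Real.sqrt (S om) := by
  intro D hD
  set μ := volume.restrict (Icc (-π) π)
  have : NeZero μ := ⟨by simp [μ, Measure.restrict_eq_zero, pi_pos]⟩
  set F := fun α => ∫ x, sqrtGap α (S x) ∂μ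
  have hF : ∀ α, ∫ x in -π..π, sqrtGap α (S x) = F α := fun α => by
    rw [intervalIntegral.integral_of_le (by linarith [pi_pos]), ← integral_Icc_eq_integral_Ioc]
  have hiff : ∀ α, D = 1 / (4 * π) * ∫ x in -π..π, sqrtGap α (S x) ↔ F α = 4 * π * D :=
    fun α => by rw [hF]; constructor <;> intro h <;> field_simp at h ⊢ <;> linarith
  obtain ⟨b, hb, hDb⟩ := exists_lt_integral_sqrtGap hint hpos (4 * π * D)
  have hF0 : F 0 < 4 * π * D := by simp only [F, sqrtGap_zero_left, integral_zero]; positivity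
  obtain ⟨α, ⟨hα, hFα⟩, huniq⟩ := StrictMonoOn.existsUnique_gt_apply_eq
    (strictMonoOn_integral_sqrtGap hint.1 hpos)
    (lipschitzOnWith_integral_sqrtGap hint.1).continuousOn hb hF0 hDb
  exact ⟨α, ⟨hα, (hiff α).2 hFα⟩, fun β hβ => huniq β ⟨hβ.1, (hiff β).1 hβ.2⟩⟩

/-- For an integrable spectral density `S_X` on `[-π,π]` which is positive
almost everywhere, for each `D > 0` there is a unique `α > 0` with
`D = (1/(4π)) ∫_{-π}^{π} (√(S_X(ω)+α) - √(S_X(ω))) √(S_X(ω)) dω`. -/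
theorem stmt13 (S : ℝ → ℝ) (hmeas : Measurable S)
    (hint : IntegrableOn S (Set.Icc (-Real.pi) Real.pi))
    (hpos : ∀ᵐ om ∂(volume.restrict (Set.Icc (-Real.pi) Real.pi)), 0 < S om) :
    ∀ D : ℝ, 0 < D → ∃! alpha : ℝ, 0 < alpha ∧
      D = (1 / (4 * Real.pi)) * ∫ om in (-Real.pi)..Real.pi,
        (Real.sqrt (S om + alpha) - Real.sqrt (S om)) * Real.sqrt (S om) :=
  stmt13_general S hint hpos

end
end

section
/- Let λ_1,…,λ_N be positive reals and define, for α > 0, F(α) = (1/N) Σ_{k=1}^{N} log( (√(λ_k + α) + √λ_k) / √λ_k ) + (1/2) log( (1/(2N)) Σ_{i=1}^{N} λ_i / (√(λ_i² + λ_i α) + λ_i) ). Then F(α) → 0 as α → 0⁺, and F is monotonically increasing on (0,∞). -/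
/-!
Write `w_k(α) = √λ_k / (√(λ_k + α) + √λ_k)`. Both logarithms in `F` are logarithms of the
`w_k`, so `F(0) = log 2 - log 2 = 0` and `F` is differentiable on `[0, ∞)`. With
`A_k = -w_k'/w_k = 1 / (2 √(λ_k + α) (√(λ_k + α) + √λ_k))` one gets
`F' = (1/N) Σ A_k - (Σ A_k w_k) / (2 Σ w_k)`. As `λ_k` grows, `w_k` increases and `A_k`
decreases, so Chebyshev's sum inequality bounds the `w`-weighted mean of the `A_k` by their plain
mean, and `F' ≥ 0`.
-/

open Real Filter Set Topology

noncomputable section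

theorem Antivary.sum_mul_div_sum_le_sum_div_card {ι : Type*} [Fintype ι] {f g : ι → ℝ}
    (hfg : Antivary f g) (hg : 0 < ∑ i, g i) :
    (∑ i, g i * f i) / ∑ i, g i ≤ (∑ i, f i) / Fintype.card ι := by
  have hι : Nonempty ι := by
    by_contra h
    simp [not_nonempty_iff.mp h] at hg
  rw [div_le_div_iff₀ hg (by exact_mod_cast Fintype.card_pos), mul_comm]
  simpa only [mul_comm (g _)] using hfg.card_mul_sum_le_sum_mul_sum

def sqrtWeight (l a : ℝ) : ℝ := √l / (√(l + a) + √l)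

def sqrtWeightDecay (l a : ℝ) : ℝ := (2 * √(l + a) * (√(l + a) + √l))⁻¹

theorem sqrtWeight_pos {l a : ℝ} (hl : 0 < l) : 0 < sqrtWeight l a := by
  unfold sqrtWeight
  have := sqrt_pos.2 hl
  positivity

theorem sqrtWeight_zero {l : ℝ} (hl : 0 < l) : sqrtWeight l 0 = 1 / 2 := by
  have := (sqrt_pos.2 hl).ne'
  rw [sqrtWeight, add_zero]
  field_simp
  ring

theorem log_sqrt_add_sqrt_div_sqrt (l a : ℝ) :
    log ((√(l + a) + √l) / √l) = -log (sqrtWeight l a) := by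
  rw [sqrtWeight, ← inv_div, log_inv]

theorem div_sqrt_sq_add_mul_add_self {l : ℝ} (hl : 0 < l) (a : ℝ) :
    l / (√(l ^ 2 + l * a) + l) = sqrtWeight l a := by
  have := sqrt_pos.2 hl
  rw [show l ^ 2 + l * a = l * (l + a) by ring, sqrt_mul hl.le, sqrtWeight,
    div_eq_div_iff (by positivity) (by positivity)]
  linear_combination (-√(l + a)) * mul_self_sqrt hl.le

theorem sqrtWeight_le_sqrtWeight {l l' a : ℝ} (hl : 0 < l) (hll' : l ≤ l') (ha : 0 ≤ a) :
    sqrtWeight l a ≤ sqrtWeight l' a := by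
  have hl' : 0 < l' := hl.trans_le hll'
  have hcross : √l * √(l' + a) ≤ √l' * √(l + a) := by
    rw [← sqrt_mul hl.le, ← sqrt_mul hl'.le]
    exact sqrt_le_sqrt (by nlinarith)
  unfold sqrtWeight
  have := sqrt_pos.2 hl
  rw [div_le_div_iff₀ (by positivity) (by positivity)]
  nlinarith

theorem sqrtWeightDecay_le_sqrtWeightDecay {l l' a : ℝ} (hl : 0 < l + a) (hll' : l ≤ l') :
    sqrtWeightDecay l' a ≤ sqrtWeightDecay l a := by
  have := sqrt_pos.2 hl
  unfold sqrtWeightDecay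
  gcongr

theorem hasDerivAt_sqrtWeight {l a : ℝ} (hl : 0 < l + a) :
    HasDerivAt (sqrtWeight l) (-(sqrtWeight l a * sqrtWeightDecay l a)) a := by
  have hs := sqrt_pos.2 hl
  have hsum : 0 < √(l + a) + √l := by positivity
  have hsqrt : HasDerivAt (fun x => √(l + x)) (1 / (2 * √(l + a))) a := by
    simpa using ((hasDerivAt_id a).const_add l).sqrt hl.ne'
  refine ((hasDerivAt_const a √l).div (hsqrt.add_const √l) hsum.ne').congr_deriv ?_
  rw [sqrtWeight, sqrtWeightDecay]
  field_simp
  ring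

section RateLoss

variable {ι : Type*} [Fintype ι] {lam : ι → ℝ}

def rateLoss (lam : ι → ℝ) (α : ℝ) : ℝ :=
  (1 / Fintype.card ι) * ∑ k, -log (sqrtWeight (lam k) α)
    + (1 / 2) * log ((1 / (2 * Fintype.card ι)) * ∑ k, sqrtWeight (lam k) α)

def rateLossDeriv (lam : ι → ℝ) (α : ℝ) : ℝ :=
  (∑ k, sqrtWeightDecay (lam k) α) / Fintype.card ι
    - (∑ k, sqrtWeight (lam k) α * sqrtWeightDecay (lam k) α)
      / (2 * ∑ k, sqrtWeight (lam k) α)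

theorem rateLoss_zero (hlam : ∀ k, 0 < lam k) : rateLoss lam 0 = 0 := by
  rcases isEmpty_or_nonempty ι with hι | hι
  · simp [rateLoss]
  have hc : (0 : ℝ) < Fintype.card ι := by exact_mod_cast Fintype.card_pos
  simp only [rateLoss, sqrtWeight_zero (hlam _), Finset.sum_const, Finset.card_univ, nsmul_eq_mul]
  rw [show 1 / (2 * (Fintype.card ι : ℝ)) * (Fintype.card ι * (1 / 2)) = 2⁻¹ * 2⁻¹ by
    field_simp, log_mul (by norm_num) (by norm_num)]
  simp only [one_div, log_inv]
  field_simp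
  ring

variable [Nonempty ι]

theorem hasDerivAt_rateLoss (hlam : ∀ k, 0 < lam k) {α : ℝ} (hα : 0 ≤ α) :
    HasDerivAt (rateLoss lam) (rateLossDeriv lam α) α := by
  have hw k : HasDerivAt (fun x => sqrtWeight (lam k) x) _ α :=
    hasDerivAt_sqrtWeight (by linarith [hlam k])
  have hwpos k : 0 < sqrtWeight (lam k) α := sqrtWeight_pos (hlam k)
  have hSpos : 0 < ∑ k, sqrtWeight (lam k) α :=
    Finset.sum_pos (fun k _ => hwpos k) Finset.univ_nonempty
  have hc : (0 : ℝ) < Fintype.card ι := by exact_mod_cast Fintype.card_pos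
  have hlogs := HasDerivAt.fun_sum (u := Finset.univ) fun k _ => ((hw k).log (hwpos k).ne').neg
  have hlogS := ((HasDerivAt.fun_sum (u := Finset.univ) fun k _ => hw k).const_mul
    (1 / (2 * (Fintype.card ι : ℝ)))).log (by positivity)
  refine ((hlogs.const_mul _).add (hlogS.const_mul (1 / 2))).congr_deriv ?_
  have hterm k : -(-(sqrtWeight (lam k) α * sqrtWeightDecay (lam k) α) / sqrtWeight (lam k) α)
      = sqrtWeightDecay (lam k) α := by
    field_simp [(hwpos k).ne']
  simp only [hterm, rateLossDeriv, Finset.sum_neg_distrib]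
  field_simp
  ring

theorem rateLossDeriv_nonneg (hlam : ∀ k, 0 < lam k) {α : ℝ} (hα : 0 ≤ α) :
    0 ≤ rateLossDeriv lam α := by
  have hanti : Antivary (fun k => sqrtWeightDecay (lam k) α) (fun k => sqrtWeight (lam k) α) :=
    fun i j hij => sqrtWeightDecay_le_sqrtWeightDecay (by linarith [hlam i])
      (not_le.1 fun hji => hij.not_ge (sqrtWeight_le_sqrtWeight (hlam j) hji hα)).le
  have hSpos : 0 < ∑ k, sqrtWeight (lam k) α :=
    Finset.sum_pos (fun k _ => sqrtWeight_pos (hlam k)) Finset.univ_nonempty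
  have hmean := hanti.sum_mul_div_sum_le_sum_div_card hSpos
  have hdecay : 0 ≤ (∑ k, sqrtWeightDecay (lam k) α) / Fintype.card ι := by
    unfold sqrtWeightDecay
    positivity
  rw [rateLossDeriv, mul_comm, ← div_div]
  linarith

theorem monotoneOn_rateLoss (hlam : ∀ k, 0 < lam k) : MonotoneOn (rateLoss lam) (Ici 0) := by
  refine monotoneOn_of_hasDerivWithinAt_nonneg (f' := rateLossDeriv lam) (convex_Ici 0)
    (fun α hα => (hasDerivAt_rateLoss hlam hα).continuousAt.continuousWithinAt)
    (fun α hα => (hasDerivAt_rateLoss hlam (interior_subset hα)).hasDerivWithinAt)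
    (fun α hα => rateLossDeriv_nonneg hlam (interior_subset hα))

theorem tendsto_rateLoss_nhdsGT_zero (hlam : ∀ k, 0 < lam k) :
    Tendsto (rateLoss lam) (𝓝[>] 0) (𝓝 0) := by
  have hcont := (hasDerivAt_rateLoss hlam le_rfl).continuousAt
  rw [ContinuousAt, rateLoss_zero hlam] at hcont
  exact hcont.mono_left nhdsWithin_le_nhds

end RateLoss

/-- The rate-loss function
`F(α) = (1/N) Σ_k log((√(λ_k+α) + √λ_k)/√λ_k) + (1/2) log((1/(2N)) Σ_i λ_i/(√(λ_i²+λ_iα)+λ_i))`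
tends to `0` as `α → 0⁺` and is monotonically increasing on `(0,∞)`. -/
theorem stmt16 {N : ℕ} (hN : 0 < N) (lam : Fin N → ℝ) (hlam : ∀ k, 0 < lam k) :
    Filter.Tendsto
      (fun alpha : ℝ =>
        (1 / N) * ∑ k, Real.log ((Real.sqrt (lam k + alpha) + Real.sqrt (lam k))
            / Real.sqrt (lam k))
          + (1 / 2) * Real.log ((1 / (2 * N)) * ∑ i,
              lam i / (Real.sqrt (lam i ^ 2 + lam i * alpha) + lam i)))
      (nhdsWithin 0 (Set.Ioi 0)) (nhds 0) ∧
    MonotoneOn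
      (fun alpha : ℝ =>
        (1 / N) * ∑ k, Real.log ((Real.sqrt (lam k + alpha) + Real.sqrt (lam k))
            / Real.sqrt (lam k))
          + (1 / 2) * Real.log ((1 / (2 * N)) * ∑ i,
              lam i / (Real.sqrt (lam i ^ 2 + lam i * alpha) + lam i)))
      (Set.Ioi 0) := by
  have : Nonempty (Fin N) := ⟨⟨0, hN⟩⟩
  convert And.intro (tendsto_rateLoss_nhdsGT_zero hlam)
    ((monotoneOn_rateLoss hlam).mono Ioi_subset_Ici_self) using 3 <;>
  simp only [rateLoss, Fintype.card_fin, log_sqrt_add_sqrt_div_sqrt,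
    div_sqrt_sq_add_mul_add_self (hlam _)]
end
end

section
/- Let K_X be a real symmetric positive-definite N×N matrix with eigenvalues λ_1,…,λ_N, let α > 0, and set K_{Z*} = (1/2)√(K_X² + α K_X) − (1/2) K_X. Then tr( (K_X + K_{Z*})^{-1} K_{Z*} K_X ) = (1/α) Σ_{k=1}^{N} ( √(λ_k² + λ_k α) − λ_k )², and tr(K_{Z*}) > tr( (K_X + K_{Z*})^{-1} K_{Z*} K_X ); that is, Wiener post-filtering strictly reduces the distortion below tr(K_{Z*}). -/
/-!
Every matrix in the statement is a function of `K_X` in the continuous functional calculus: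
`S` is a positive semidefinite square root of `K_X² + α K_X`, so by uniqueness of such roots
it is `e(K_X)` with `e(x) = √(x² + x α)`. Hence `(K_X + K_{Z*})⁻¹ K_{Z*} K_X` is `w(K_X)` for
the scalar function `w(x) = (x + z(x))⁻¹ z(x) x`, `z = (e - id)/2`, and its trace is
`Σ_k w(λ_k)`. Since `e(x)² - x² = x α`, one gets `w(x) = (e(x) - x) x / (e(x) + x) = (e(x) - x)² / α`,
and `w(x) < z(x)` because `x < x + z(x)`.
-/

namespace Matrix

variable {n 𝕜 : Type*} [RCLike 𝕜] [Fintype n] [DecidableEq n] {A : Matrix n n 𝕜}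

namespace IsHermitian

lemma trace_cfc (hA : A.IsHermitian) (f : ℝ → ℝ) :
    (cfc f A).trace = ∑ i, (f (hA.eigenvalues i) : 𝕜) := by
  rw [hA.cfc_eq, IsHermitian.cfc, Unitary.conjStarAlgAut_apply, trace_mul_cycle,
    Unitary.coe_star_mul_self, one_mul, trace_diagonal]
  rfl

lemma inv_cfc (hA : A.IsHermitian) {f : ℝ → ℝ} (hf : ∀ x ∈ spectrum ℝ A, f x ≠ 0) :
    (cfc f A)⁻¹ = cfc (fun x ↦ (f x)⁻¹) A := by
  rw [nonsing_inv_eq_ringInverse]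
  exact (cfc_inv f A hf (finite_real_spectrum.continuousOn f)).symm

lemma sq_add_smul_eq_cfc (hA : A.IsHermitian) (r : ℝ) :
    A ^ 2 + r • A = cfc (fun x ↦ x ^ 2 + x * r) A := by
  rw [cfc_add (a := A) (· ^ 2) (· * r) (finite_real_spectrum.continuousOn _)
    (finite_real_spectrum.continuousOn _), cfc_pow_id A 2 hA.isSelfAdjoint,
    ← cfc_smul_id (R := ℝ) r A hA.isSelfAdjoint]
  exact congrArg _ (cfc_congr fun x _ ↦ mul_comm r x)

lemma inv_add_cfc_mul_cfc_mul (hA : A.IsHermitian) {f : ℝ → ℝ}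
    (hf : ∀ x ∈ spectrum ℝ A, x + f x ≠ 0) :
    (A + cfc f A)⁻¹ * cfc f A * A = cfc (fun x ↦ (x + f x)⁻¹ * f x * x) A := by
  have hc (g : ℝ → ℝ) : ContinuousOn g (spectrum ℝ A) := finite_real_spectrum.continuousOn g
  rw [cfc_mul _ _ _ (hc _) (hc _), cfc_mul _ _ _ (hc _) (hc _), cfc_id' ℝ A hA.isSelfAdjoint,
    ← hA.inv_cfc hf, cfc_add (a := A) _ _ (hc _) (hc _), cfc_id' ℝ A hA.isSelfAdjoint]

end IsHermitian

open scoped ComplexOrder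

lemma PosDef.pos_of_mem_spectrum (hA : A.PosDef) {x : ℝ} (hx : x ∈ spectrum ℝ A) : 0 < x := by
  obtain ⟨i, rfl⟩ := hA.isHermitian.spectrum_real_eq_range_eigenvalues ▸ hx
  exact hA.eigenvalues_pos i

open scoped MatrixOrder in
lemma PosSemidef.eq_cfc_sqrt_of_mul_self_eq {S : Matrix n n 𝕜} (hS : S.PosSemidef)
    {g : ℝ → ℝ} (hg : ∀ x ∈ spectrum ℝ A, 0 ≤ g x) (hSg : S * S = cfc g A) :
    S = cfc (fun x ↦ √(g x)) A := by
  refine (CFC.mul_self_eq_mul_self_iff S _ hS.nonneg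
    (cfc_nonneg fun x _ ↦ Real.sqrt_nonneg _)).mp ?_
  rw [hSg, ← cfc_mul _ _ A (finite_real_spectrum.continuousOn _)
    (finite_real_spectrum.continuousOn _)]
  exact cfc_congr fun x hx ↦ (Real.mul_self_sqrt (hg x hx)).symm

end Matrix

/-- The eigenvalue of `K_{Z*}` on the eigenspace of `K_X` with eigenvalue `x`. -/
noncomputable def optimalNoiseVar (α x : ℝ) : ℝ := (1 / 2) * √(x ^ 2 + x * α) - (1 / 2) * x

section optimalNoiseVar

variable {α x : ℝ}

lemma lt_sqrt_sq_add_mul (hx : 0 < x) (hα : 0 < α) : x < √(x ^ 2 + x * α) :=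
  Real.lt_sqrt_of_sq_lt (by nlinarith)

lemma optimalNoiseVar_pos (hx : 0 < x) (hα : 0 < α) : 0 < optimalNoiseVar α x := by
  have := lt_sqrt_sq_add_mul hx hα
  unfold optimalNoiseVar
  linarith

lemma inv_add_optimalNoiseVar_mul_mul_eq (hx : 0 < x) (hα : 0 < α) :
    (x + optimalNoiseVar α x)⁻¹ * optimalNoiseVar α x * x
      = 1 / α * (√(x ^ 2 + x * α) - x) ^ 2 := by
  have hlt := lt_sqrt_sq_add_mul hx hα
  have hsq : √(x ^ 2 + x * α) ^ 2 = x ^ 2 + x * α := Real.sq_sqrt (by positivity)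
  rw [optimalNoiseVar]
  generalize √(x ^ 2 + x * α) = e at hlt hsq ⊢
  have hpos : 0 < x + e := by linarith
  rw [show x + (1 / 2 * e - 1 / 2 * x) = (x + e) / 2 by ring,
    show 1 / 2 * e - 1 / 2 * x = (e - x) / 2 by ring]
  field_simp
  linear_combination (x - e) * hsq

end optimalNoiseVar

lemma inv_add_mul_mul_lt {x z : ℝ} (hx : 0 < x) (hz : 0 < z) : (x + z)⁻¹ * z * x < z := by
  rw [inv_mul_eq_div, div_mul_eq_mul_div, div_lt_iff₀ (by positivity)]
  nlinarith

/-- With `K_{Z*} = (1/2)√(K_X² + α K_X) - (1/2)K_X` (where `S` is the PSD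
square root of `K_X² + α K_X`), the Wiener post-filtered distortion satisfies
`tr((K_X + K_{Z*})⁻¹ K_{Z*} K_X) = (1/α) Σ_k (√(λ_k² + λ_k α) - λ_k)²`, and it is strictly
smaller than `tr K_{Z*}`. -/
theorem stmt19 {N : ℕ} (hN : 0 < N)
    (K_X : Matrix (Fin N) (Fin N) ℝ) (hK : K_X.PosDef)
    (alpha : ℝ) (halpha : 0 < alpha)
    (S : Matrix (Fin N) (Fin N) ℝ) (hS : S.PosSemidef)
    (hS2 : S * S = K_X ^ 2 + alpha • K_X) :
    ((K_X + ((1 / 2 : ℝ) • S - (1 / 2 : ℝ) • K_X))⁻¹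
        * ((1 / 2 : ℝ) • S - (1 / 2 : ℝ) • K_X) * K_X).trace
      = (1 / alpha) * ∑ k, (Real.sqrt (hK.1.eigenvalues k ^ 2 + hK.1.eigenvalues k * alpha)
          - hK.1.eigenvalues k) ^ 2 ∧
    ((K_X + ((1 / 2 : ℝ) • S - (1 / 2 : ℝ) • K_X))⁻¹
        * ((1 / 2 : ℝ) • S - (1 / 2 : ℝ) • K_X) * K_X).trace
      < ((1 / 2 : ℝ) • S - (1 / 2 : ℝ) • K_X).trace := by
  have hA : K_X.IsHermitian := hK.isHermitian
  have hc (f : ℝ → ℝ) : ContinuousOn f (spectrum ℝ K_X) :=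
    K_X.finite_real_spectrum.continuousOn f
  have hS_cfc : S = cfc (fun x ↦ √(x ^ 2 + x * alpha)) K_X :=
    hS.eq_cfc_sqrt_of_mul_self_eq (fun x hx ↦ by positivity [hK.pos_of_mem_spectrum hx])
      (hS2.trans (hA.sq_add_smul_eq_cfc alpha))
  have hKZ : (1 / 2 : ℝ) • S - (1 / 2 : ℝ) • K_X = cfc (optimalNoiseVar alpha) K_X := by
    rw [hS_cfc, ← cfc_const_mul _ _ _ (hc _), ← cfc_const_mul_id _ _ hA.isSelfAdjoint,
      ← cfc_sub (hf := hc _) (hg := hc _)]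
    rfl
  have hpos (k : Fin N) : 0 < hA.eigenvalues k := hK.eigenvalues_pos k
  rw [hKZ, hA.inv_add_cfc_mul_cfc_mul fun x hx ↦ (add_pos (hK.pos_of_mem_spectrum hx)
    (optimalNoiseVar_pos (hK.pos_of_mem_spectrum hx) halpha)).ne', hA.trace_cfc, hA.trace_cfc,
    Finset.mul_sum]
  refine ⟨Finset.sum_congr rfl fun k _ ↦ inv_add_optimalNoiseVar_mul_mul_eq (hpos k) halpha, ?_⟩
  have : Nonempty (Fin N) := Fin.pos_iff_nonempty.mp hN
  exact Finset.sum_lt_sum_of_nonempty Finset.univ_nonempty fun k _ ↦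
    inv_add_mul_mul_lt (hpos k) (optimalNoiseVar_pos (hpos k) halpha)
end
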